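/- arXiv:2205.10834 — 5 statements merged into one kernel-verified Lean document; each statement's English description precedes it below -/
import Mathlib

section
/- Let G be a simple graph with vertex set V, let C' ⊆ V, let v ∈ V \ C', and set C = C' ∪ {v}. Then for every a ∈ C', edist_{G[C]}(a,v) = 1 + ⨅_{b ∈ N_G(v) ∩ C'} edist_{G[C']}(a,b), where the infimum is taken in ℕ∞ over all neighbors b of v in G that lie in C' (the infimum over the empty set is ∞, and ∞ + 1 = ∞). -/
private lemma walk_avoid_aux {V : Type*} (G : SimpleGraph V) (C' : Set V) (v : V) :
    ∀ {x y : ↑(insert v C')} (p : (G.induce (insert v C')).Walk x y),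
      (∀ z ∈ p.support, z.1 ≠ v) → ∀ (hx : x.1 ∈ C') (hy : y.1 ∈ C'),
      ∃ q : (G.induce C').Walk ⟨x.1, hx⟩ ⟨y.1, hy⟩, q.length = p.length := by
  intro x y p
  induction p with
  | nil =>
    intro _ hx hy
    exact ⟨SimpleGraph.Walk.nil.copy rfl (Subtype.ext rfl), by simp⟩
  | @cons u w y h p ih =>
    intro hsup hx hy
    have hw : w.1 ∈ C' := by
      have hne : w.1 ≠ v := hsup w (by simp [SimpleGraph.Walk.support_cons,
        SimpleGraph.Walk.start_mem_support])
      rcases w.2 with h' | h'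
      · exact absurd h' hne
      · exact h'
    obtain ⟨q, hq⟩ := ih (fun z hz => hsup z (by simp [SimpleGraph.Walk.support_cons, hz])) hw hy
    have hadj : (G.induce C').Adj ⟨u.1, hx⟩ ⟨w.1, hw⟩ := by
      simpa using h
    exact ⟨SimpleGraph.Walk.cons hadj q, by simp [hq]⟩

/-- Introduce-bag distance update: the distance from `a ∈ C'` to the newly introduced
vertex `v` in `G[C' ∪ {v}]` is one plus the infimum, over neighbors `b` of `v` lying
in `C'`, of the distance from `a` to `b` in `G[C']` (infimum in `ℕ∞`, empty infimum `∞`). -/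
theorem edist_to_introduced_vertex
    {V : Type*} (G : SimpleGraph V) (C' : Set V) (v : V) (hv : v ∉ C')
    (C : Set V) (hC : C = insert v C')
    (a : V) (ha : a ∈ C') (ha' : a ∈ C) (hv' : v ∈ C) :
    (G.induce C).edist ⟨a, ha'⟩ ⟨v, hv'⟩ =
      1 + ⨅ b : {b : V // b ∈ G.neighborSet v ∩ C'},
        (G.induce C').edist ⟨a, ha⟩ ⟨b.1, b.2.2⟩ := by
  subst hC
  classical
  set f : {b : V // b ∈ G.neighborSet v ∩ C'} → ℕ∞ :=
    fun b => (G.induce C').edist ⟨a, ha⟩ ⟨b.1, b.2.2⟩ with hf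
  -- sublemma: LHS ≤ 1 + f b for each b
  have key : ∀ b : {b : V // b ∈ G.neighborSet v ∩ C'},
      (G.induce (insert v C')).edist ⟨a, ha'⟩ ⟨v, hv'⟩ ≤ 1 + f b := by
    intro b
    rcases eq_or_ne (f b) ⊤ with htop | htop
    · simp [htop]
    obtain ⟨p, hp⟩ := SimpleGraph.exists_walk_of_edist_ne_top htop
    have hst : Set.MapsTo (id : V → V) C' (insert v C') := fun x hx => Set.mem_insert_of_mem _ hx
    let ι : G.induce C' →g G.induce (insert v C') :=
      SimpleGraph.induceHom SimpleGraph.Hom.id hst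
    have hadj : (G.induce (insert v C')).Adj ⟨b.1, Set.mem_insert_of_mem _ b.2.2⟩ ⟨v, hv'⟩ := by
      simpa using (b.2.1 : G.Adj v b.1).symm
    have hmap : ι ⟨a, ha⟩ = (⟨a, ha'⟩ : ↑(insert v C')) := rfl
    have hmap2 : ι ⟨b.1, b.2.2⟩ = (⟨b.1, Set.mem_insert_of_mem _ b.2.2⟩ : ↑(insert v C')) := rfl
    let q : (G.induce (insert v C')).Walk ⟨a, ha'⟩ ⟨v, hv'⟩ :=
      ((p.map ι).copy hmap hmap2).concat hadj
    have hlen : (q.length : ℕ∞) = f b + 1 := by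
      simp only [q, SimpleGraph.Walk.length_concat, SimpleGraph.Walk.length_copy,
        SimpleGraph.Walk.length_map]
      push_cast
      rw [hp]
    calc (G.induce (insert v C')).edist ⟨a, ha'⟩ ⟨v, hv'⟩ ≤ (q.length : ℕ∞) :=
          SimpleGraph.edist_le q
      _ = 1 + f b := by rw [hlen, add_comm]
  refine le_antisymm ?_ ?_
  · -- ≤
    rcases eq_or_ne (⨅ b, f b) ⊤ with htop | htop
    · simp [htop]
    have h1 : (⨅ b, f b) < (⨅ b, f b) + 1 :=
      ENat.lt_add_one_iff htop |>.mpr le_rfl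
    obtain ⟨b, hb⟩ := iInf_lt_iff.mp h1
    have hb' : f b ≤ ⨅ b, f b := (ENat.lt_add_one_iff htop).mp hb
    calc (G.induce (insert v C')).edist ⟨a, ha'⟩ ⟨v, hv'⟩ ≤ 1 + f b := key b
      _ ≤ 1 + ⨅ b, f b := by exact add_le_add_right hb' 1
  · -- ≥
    rcases eq_or_ne ((G.induce (insert v C')).edist ⟨a, ha'⟩ ⟨v, hv'⟩) ⊤ with htop | htop
    · simp [htop]
    obtain ⟨p, hp⟩ := SimpleGraph.exists_walk_of_edist_ne_top htop
    -- replace p by a path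
    have hle : ((p.bypass.length : ℕ∞)) ≤ (G.induce (insert v C')).edist ⟨a, ha'⟩ ⟨v, hv'⟩ := by
      rw [← hp]; exact_mod_cast Nat.cast_le.mpr p.length_bypass_le
    set q := p.bypass with hq
    have hqpath : q.IsPath := p.bypass_isPath
    have hav : (⟨a, ha'⟩ : ↑(insert v C')) ≠ ⟨v, hv'⟩ := by
      intro h
      have h2 : a = v := congrArg Subtype.val h
      exact hv (h2 ▸ ha)
    have hrev : q.reverse.IsPath := hqpath.reverse
    obtain ⟨w, hadj, r, hr⟩ := SimpleGraph.Walk.exists_eq_cons_of_ne (Ne.symm hav) q.reverse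
    have hvnot : (⟨v, hv'⟩ : ↑(insert v C')) ∉ r.support := by
      have h2 := hrev.support_nodup
      rw [hr, SimpleGraph.Walk.support_cons] at h2
      exact (List.nodup_cons.mp h2).1
    have hsup : ∀ z ∈ r.support, z.1 ≠ v := by
      intro z hz hzv
      exact hvnot (by rwa [show z = (⟨v, hv'⟩ : ↑(insert v C')) from Subtype.ext hzv] at hz)
    have hw : w.1 ∈ C' := by
      have : w.1 ≠ v := hsup w r.start_mem_support
      rcases w.2 with h' | h'
      · exact absurd h' this
      · exact h'
    obtain ⟨r', hr'⟩ := walk_avoid_aux G C' v r hsup hw ha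
    have hwb : w.1 ∈ G.neighborSet v ∩ C' := ⟨by simpa using hadj, hw⟩
    have hfb : f ⟨w.1, hwb⟩ ≤ (r.length : ℕ∞) := by
      have h2 : (G.induce C').edist ⟨w.1, hw⟩ ⟨a, ha⟩ ≤ (r'.length : ℕ∞) :=
        SimpleGraph.edist_le r'
      rw [hf]
      dsimp only
      rw [SimpleGraph.edist_comm, ← hr']
      exact h2
    calc 1 + ⨅ b, f b ≤ 1 + f ⟨w.1, hwb⟩ := add_le_add_right (iInf_le _ _) 1
      _ ≤ 1 + (r.length : ℕ∞) := add_le_add_right hfb 1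
      _ = (q.reverse.length : ℕ∞) := by rw [hr]; push_cast [SimpleGraph.Walk.length_cons]; ring
      _ = (q.length : ℕ∞) := by rw [SimpleGraph.Walk.length_reverse]
      _ ≤ _ := hle
end

section
/- Let G be a simple graph with vertex set V, and let A, B ⊆ V with A ∪ B = V such that no edge of G has one endpoint in A \ B and the other endpoint in B \ A. Then for every u ∈ A \ B and every w ∈ B \ A, edist_G(u,w) = ⨅_{x ∈ A∩B} ⨅_{y ∈ A∩B} ( edist_{G[A]}(u,x) + edist_G(x,y) + edist_{G[B]}(y,w) ), where all distances are taken in ℕ∞ and the infimum over an empty index set is ∞. -/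
open SimpleGraph

private lemma hom_edist_le {V W : Type*} {G : SimpleGraph V} {H : SimpleGraph W}
    (f : G →g H) (a b : V) : H.edist (f a) (f b) ≤ G.edist a b := by
  rcases eq_or_ne (G.edist a b) ⊤ with h | h
  · simp [h]
  · obtain ⟨p, hp⟩ := SimpleGraph.exists_walk_of_edist_ne_top h
    calc H.edist (f a) (f b) ≤ (p.map f).length := SimpleGraph.edist_le _
    _ = G.edist a b := by rw [SimpleGraph.Walk.length_map, hp]

private lemma exists_mid {V : Type*} (G : SimpleGraph V) (A B : Set V)
    (hAB : A ∪ B = Set.univ)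
    (hsep : ∀ x y, G.Adj x y → ¬(x ∈ A \ B ∧ y ∈ B \ A)) :
    ∀ {w v : V} (q : G.Walk w v) (hw : w ∈ B \ A) (_ : v ∈ A ∩ B),
      ∃ (y : V) (hy : y ∈ A ∩ B),
        G.edist v y + (G.induce B).edist ⟨y, hy.2⟩ ⟨w, hw.1⟩ ≤ q.length := by
  intro w v q
  induction q with
  | nil =>
    intro hw hv
    exact absurd hv.1 hw.2
  | @cons w w' v h q' ih =>
    intro hw hv
    have hw'nAB : w' ∉ A \ B := fun hc => hsep w' w h.symm ⟨hc, hw⟩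
    have hw'B : w' ∈ B := by
      have : w' ∈ A ∪ B := hAB ▸ Set.mem_univ w'
      rcases this with hA | hB
      · by_contra hB; exact hw'nAB ⟨hA, hB⟩
      · exact hB
    simp only [SimpleGraph.Walk.length_cons]
    push_cast
    by_cases hw'A : w' ∈ A
    · refine ⟨w', ⟨hw'A, hw'B⟩, ?_⟩
      have h1 : G.edist v w' ≤ q'.length := by
        rw [SimpleGraph.edist_comm]; exact SimpleGraph.edist_le q'
      have h2 : (G.induce B).edist ⟨w', hw'B⟩ ⟨w, hw.1⟩ ≤ 1 := by
        have hadj : (G.induce B).Adj ⟨w', hw'B⟩ ⟨w, hw.1⟩ := by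
          simp only [comap_adj, Function.Embedding.coe_subtype]; exact h.symm
        calc (G.induce B).edist ⟨w', hw'B⟩ ⟨w, hw.1⟩ ≤ (hadj.toWalk.length : ℕ∞) :=
          SimpleGraph.edist_le _
        _ = 1 := by simp
      exact add_le_add h1 h2
    · obtain ⟨y, hy, hle⟩ := ih ⟨hw'B, hw'A⟩ hv
      have hadj : (G.induce B).Adj ⟨w', hw'B⟩ ⟨w, hw.1⟩ := by
        simp only [comap_adj, Function.Embedding.coe_subtype]; exact h.symm
      have h2 : (G.induce B).edist ⟨y, hy.2⟩ ⟨w, hw.1⟩ ≤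
          (G.induce B).edist ⟨y, hy.2⟩ ⟨w', hw'B⟩ + 1 := by
        refine le_trans (SimpleGraph.edist_triangle (v := ⟨w', hw'B⟩)) ?_
        gcongr
        calc (G.induce B).edist ⟨w', hw'B⟩ ⟨w, hw.1⟩ ≤ (hadj.toWalk.length : ℕ∞) :=
          SimpleGraph.edist_le _
        _ = 1 := by simp
      refine ⟨y, hy, ?_⟩
      calc G.edist v y + (G.induce B).edist ⟨y, hy.2⟩ ⟨w, hw.1⟩
          ≤ G.edist v y + ((G.induce B).edist ⟨y, hy.2⟩ ⟨w', hw'B⟩ + 1) := by gcongr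
        _ = (G.edist v y + (G.induce B).edist ⟨y, hy.2⟩ ⟨w', hw'B⟩) + 1 := by ring
        _ ≤ (q'.length : ℕ∞) + 1 := by gcongr

private lemma exists_pair {V : Type*} (G : SimpleGraph V) (A B : Set V)
    (hAB : A ∪ B = Set.univ)
    (hsep : ∀ x y, G.Adj x y → ¬(x ∈ A \ B ∧ y ∈ B \ A)) :
    ∀ {u v : V} (p : G.Walk u v) (hu : u ∈ A \ B) (hv : v ∈ B \ A),
      ∃ (x : V) (hx : x ∈ A ∩ B) (y : V) (hy : y ∈ A ∩ B),
        (G.induce A).edist ⟨u, hu.1⟩ ⟨x, hx.1⟩ + G.edist x y +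
          (G.induce B).edist ⟨y, hy.2⟩ ⟨v, hv.1⟩ ≤ p.length := by
  intro u v p
  induction p with
  | nil =>
    intro hu hv
    exact absurd hu.1 hv.2
  | @cons u u' v h p' ih =>
    intro hu hv
    have hu'nBA : u' ∉ B \ A := fun hc => hsep u u' h ⟨hu, hc⟩
    have hu'A : u' ∈ A := by
      have : u' ∈ A ∪ B := hAB ▸ Set.mem_univ u'
      rcases this with hA | hB
      · exact hA
      · by_contra hA; exact hu'nBA ⟨hB, hA⟩
    have hadjA : (G.induce A).Adj ⟨u, hu.1⟩ ⟨u', hu'A⟩ := by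
      simp only [comap_adj, Function.Embedding.coe_subtype]; exact h
    have hstep : (G.induce A).edist ⟨u, hu.1⟩ ⟨u', hu'A⟩ ≤ 1 := by
      calc (G.induce A).edist ⟨u, hu.1⟩ ⟨u', hu'A⟩ ≤ (hadjA.toWalk.length : ℕ∞) :=
        SimpleGraph.edist_le _
      _ = 1 := by simp
    simp only [SimpleGraph.Walk.length_cons]
    push_cast
    by_cases hu'B : u' ∈ B
    · obtain ⟨y, hy, hle⟩ := exists_mid G A B hAB hsep p'.reverse hv ⟨hu'A, hu'B⟩
      rw [SimpleGraph.Walk.length_reverse] at hle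
      refine ⟨u', ⟨hu'A, hu'B⟩, y, hy, ?_⟩
      calc (G.induce A).edist ⟨u, hu.1⟩ ⟨u', hu'A⟩ + G.edist u' y +
            (G.induce B).edist ⟨y, hy.2⟩ ⟨v, hv.1⟩
          ≤ 1 + (G.edist u' y + (G.induce B).edist ⟨y, hy.2⟩ ⟨v, hv.1⟩) := by
            rw [add_assoc]; gcongr
        _ ≤ 1 + (p'.length : ℕ∞) := by gcongr
        _ = (p'.length : ℕ∞) + 1 := by ring
    · obtain ⟨x, hx, y, hy, hle⟩ := ih ⟨hu'A, hu'B⟩ hv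
      refine ⟨x, hx, y, hy, ?_⟩
      have htri : (G.induce A).edist ⟨u, hu.1⟩ ⟨x, hx.1⟩ ≤
          1 + (G.induce A).edist ⟨u', hu'A⟩ ⟨x, hx.1⟩ := by
        refine le_trans (SimpleGraph.edist_triangle (v := ⟨u', hu'A⟩)) ?_
        gcongr
      calc (G.induce A).edist ⟨u, hu.1⟩ ⟨x, hx.1⟩ + G.edist x y +
            (G.induce B).edist ⟨y, hy.2⟩ ⟨v, hv.1⟩
          ≤ (1 + (G.induce A).edist ⟨u', hu'A⟩ ⟨x, hx.1⟩) + G.edist x y +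
            (G.induce B).edist ⟨y, hy.2⟩ ⟨v, hv.1⟩ := by gcongr
        _ = ((G.induce A).edist ⟨u', hu'A⟩ ⟨x, hx.1⟩ + G.edist x y +
            (G.induce B).edist ⟨y, hy.2⟩ ⟨v, hv.1⟩) + 1 := by ring
        _ ≤ (p'.length : ℕ∞) + 1 := by gcongr

/-- Join-bag distance composition: if `A ∪ B = V` and no edge joins `A \ B` to `B \ A`,
then for `u ∈ A \ B` and `w ∈ B \ A`, the distance from `u` to `w` in `G` is the infimum,
over pairs `x, y ∈ A ∩ B`, of `edist_{G[A]}(u,x) + edist_G(x,y) + edist_{G[B]}(y,w)`. -/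
theorem edist_join_composition
    {V : Type*} (G : SimpleGraph V) (A B : Set V) (hAB : A ∪ B = Set.univ)
    (hsep : ∀ x y, G.Adj x y → ¬(x ∈ A \ B ∧ y ∈ B \ A))
    (u w : V) (hu : u ∈ A \ B) (hw : w ∈ B \ A) :
    G.edist u w =
      ⨅ (x : ↥(A ∩ B)) (y : ↥(A ∩ B)),
        (G.induce A).edist ⟨u, hu.1⟩ ⟨x.1, x.2.1⟩ + G.edist x.1 y.1 +
          (G.induce B).edist ⟨y.1, y.2.2⟩ ⟨w, hw.1⟩ := by
  apply le_antisymm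
  · refine le_iInf fun x => le_iInf fun y => ?_
    have hA : G.edist u x.1 ≤ (G.induce A).edist ⟨u, hu.1⟩ ⟨x.1, x.2.1⟩ :=
      hom_edist_le (SimpleGraph.Embedding.induce A).toHom _ _
    have hB : G.edist y.1 w ≤ (G.induce B).edist ⟨y.1, y.2.2⟩ ⟨w, hw.1⟩ :=
      hom_edist_le (SimpleGraph.Embedding.induce B).toHom _ _
    calc G.edist u w ≤ G.edist u y.1 + G.edist y.1 w := SimpleGraph.edist_triangle
      _ ≤ (G.edist u x.1 + G.edist x.1 y.1) + G.edist y.1 w := by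
          gcongr; exact SimpleGraph.edist_triangle
      _ ≤ (G.induce A).edist ⟨u, hu.1⟩ ⟨x.1, x.2.1⟩ + G.edist x.1 y.1 +
          (G.induce B).edist ⟨y.1, y.2.2⟩ ⟨w, hw.1⟩ := by gcongr
  · rcases eq_or_ne (G.edist u w) ⊤ with htop | htop
    · rw [htop]; exact le_top
    · obtain ⟨p, hp⟩ := SimpleGraph.exists_walk_of_edist_ne_top htop
      obtain ⟨x, hx, y, hy, hle⟩ := exists_pair G A B hAB hsep p hu hw
      exact le_trans (iInf_le_of_le ⟨x, hx⟩ (iInf_le_of_le ⟨y, hy⟩ le_rfl))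
        (le_of_le_of_eq hle hp)
end

section
/- Let G be a simple graph with vertex set V, and let A, B ⊆ V with A ∪ B = V such that no edge of G has one endpoint in A \ B and the other endpoint in B \ A. Then for every u ∈ A \ B and every b ∈ B, edist_G(u,b) = ⨅_{x ∈ A∩B} ( edist_{G[A]}(u,x) + edist_G(x,b) ), where all distances are taken in ℕ∞ and the infimum over an empty index set is ∞. -/
lemma edist_induce_le' {V : Type*} (G : SimpleGraph V) (s : Set V) (u v : V)
    (hu : u ∈ s) (hv : v ∈ s) :
    G.edist u v ≤ (G.induce s).edist ⟨u, hu⟩ ⟨v, hv⟩ := by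
  rcases eq_or_ne ((G.induce s).edist ⟨u, hu⟩ ⟨v, hv⟩) ⊤ with h | h
  · simp [h]
  · obtain ⟨p, hp⟩ := SimpleGraph.exists_walk_of_edist_ne_top h
    calc G.edist u v ≤ (p.map (SimpleGraph.Embedding.induce s).toHom).length :=
          SimpleGraph.edist_le _
      _ = (p.length : ℕ∞) := by rw [SimpleGraph.Walk.length_map]
      _ = _ := hp

lemma walk_cross_aux {V : Type*} (G : SimpleGraph V) (A B : Set V) (hAB : A ∪ B = Set.univ)
    (hsep : ∀ x y, G.Adj x y → ¬(x ∈ A \ B ∧ y ∈ B \ A))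
    {u b : V} (p : G.Walk u b) (hu : u ∈ A \ B) (hb : b ∈ B) :
    ∃ x : ↥(A ∩ B), (G.induce A).edist ⟨u, hu.1⟩ ⟨x.1, x.2.1⟩ + G.edist x.1 b
      ≤ p.length := by
  induction p with
  | nil => exact absurd hb hu.2
  | @cons u v b h p ih =>
    by_cases hv : v ∈ B
    · have hvA : v ∈ A := by
        by_contra hvA
        exact hsep u v h ⟨hu, ⟨hv, hvA⟩⟩
      refine ⟨⟨v, hvA, hv⟩, ?_⟩
      have h1 : (G.induce A).edist ⟨u, hu.1⟩ ⟨v, hvA⟩ ≤ 1 :=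
        (SimpleGraph.edist_eq_one_iff_adj.mpr (by exact h)).le
      calc (G.induce A).edist ⟨u, hu.1⟩ ⟨v, hvA⟩ + G.edist v b
          ≤ 1 + (p.length : ℕ∞) := add_le_add h1 (SimpleGraph.edist_le p)
        _ = ((p.length + 1 : ℕ) : ℕ∞) := by push_cast; ring
        _ = _ := by rw [SimpleGraph.Walk.length_cons]
    · have hvA : v ∈ A := by
        have := Set.eq_univ_iff_forall.mp hAB v
        rcases this with h' | h'
        · exact h'
        · exact absurd h' hv
      obtain ⟨x, hx⟩ := ih ⟨hvA, hv⟩ hb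
      refine ⟨x, ?_⟩
      have h1 : (G.induce A).edist ⟨u, hu.1⟩ ⟨v, hvA⟩ ≤ 1 :=
        (SimpleGraph.edist_eq_one_iff_adj.mpr (by exact h)).le
      have htri : (G.induce A).edist ⟨u, hu.1⟩ ⟨x.1, x.2.1⟩
          ≤ (G.induce A).edist ⟨u, hu.1⟩ ⟨v, hvA⟩
            + (G.induce A).edist ⟨v, hvA⟩ ⟨x.1, x.2.1⟩ :=
        SimpleGraph.edist_triangle
      calc (G.induce A).edist ⟨u, hu.1⟩ ⟨x.1, x.2.1⟩ + G.edist x.1 b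
          ≤ ((G.induce A).edist ⟨u, hu.1⟩ ⟨v, hvA⟩
            + (G.induce A).edist ⟨v, hvA⟩ ⟨x.1, x.2.1⟩) + G.edist x.1 b :=
            add_le_add_left htri _
        _ ≤ 1 + ((G.induce A).edist ⟨v, hvA⟩ ⟨x.1, x.2.1⟩ + G.edist x.1 b) := by
            rw [add_assoc]; exact add_le_add_left h1 _
        _ ≤ 1 + (p.length : ℕ∞) := add_le_add_right hx _
        _ = ((p.length + 1 : ℕ) : ℕ∞) := by push_cast; ring
        _ = _ := by rw [SimpleGraph.Walk.length_cons]

/-- Join-bag update of the table `H`: if `A ∪ B = V` and no edge joins `A \ B` to `B \ A`,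
then for `u ∈ A \ B` and `b ∈ B`, the distance from `u` to `b` in `G` is the infimum,
over `x ∈ A ∩ B`, of `edist_{G[A]}(u,x) + edist_G(x,b)`. -/
theorem edist_join_composition_boundary
    {V : Type*} (G : SimpleGraph V) (A B : Set V) (hAB : A ∪ B = Set.univ)
    (hsep : ∀ x y, G.Adj x y → ¬(x ∈ A \ B ∧ y ∈ B \ A))
    (u b : V) (hu : u ∈ A \ B) (hb : b ∈ B) :
    G.edist u b =
      ⨅ (x : ↥(A ∩ B)), (G.induce A).edist ⟨u, hu.1⟩ ⟨x.1, x.2.1⟩ + G.edist x.1 b := by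
  apply le_antisymm
  · refine le_iInf fun x => ?_
    calc G.edist u b ≤ G.edist u x.1 + G.edist x.1 b := SimpleGraph.edist_triangle
      _ ≤ _ := add_le_add_left (edist_induce_le' G A u x.1 hu.1 x.2.1) _
  · rcases eq_or_ne (G.edist u b) ⊤ with h | h
    · simp [h]
    · obtain ⟨p, hp⟩ := SimpleGraph.exists_walk_of_edist_ne_top h
      obtain ⟨x, hx⟩ := walk_cross_aux G A B hAB hsep p hu hb
      exact le_trans (iInf_le _ x) (hp ▸ hx)
end

section
/- Let G be a simple graph with vertex set V, let s be a natural number, and let C ⊆ C'' ⊆ V and S ⊆ C be such that no edge of G has one endpoint in C \ S and the other endpoint in C'' \ C. Suppose w, z ∈ C \ S satisfy edist_{G[C]}(w,z) > s and edist_{G[C'']}(w,z) ≤ s. Then there exist a, b ∈ S such that edist_{G[C]}(w,a) + edist_{G[C'']}(a,b) + edist_{G[C]}(b,z) ≤ s. -/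
private lemma edist_mono_induce {V : Type*} (G : SimpleGraph V) {C C'' : Set V}
    (hCC : C ⊆ C'') (x y : C) :
    (G.induce C'').edist ⟨x, hCC x.2⟩ ⟨y, hCC y.2⟩ ≤ (G.induce C).edist x y := by
  rcases eq_or_ne ((G.induce C).edist x y) ⊤ with h | h
  · simp [h]
  · obtain ⟨p, hp⟩ := SimpleGraph.exists_walk_of_edist_ne_top h
    have := SimpleGraph.edist_le (p.map (G.induceHomOfLE hCC).toHom)
    rw [SimpleGraph.Walk.length_map, hp] at this
    exact this

/-- The key insight behind 'requests': if `w, z` lie in `C \ S`, no edge joins `C \ S` to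
`C'' \ C`, `w` and `z` are at distance more than `s` inside `G[C]` but at distance at most
`s` in `G[C'']`, then there are boundary vertices `a, b ∈ S` with
`edist_{G[C]}(w,a) + edist_{G[C'']}(a,b) + edist_{G[C]}(b,z) ≤ s`. -/
theorem request_decomposition
    {V : Type*} (G : SimpleGraph V) (s : ℕ)
    (C C'' S : Set V) (hCC : C ⊆ C'') (hSC : S ⊆ C)
    (hsep : ∀ x y, G.Adj x y → ¬(x ∈ C \ S ∧ y ∈ C'' \ C))
    (w z : V) (hw : w ∈ C \ S) (hz : z ∈ C \ S)
    (hfar : (s : ℕ∞) < (G.induce C).edist ⟨w, hw.1⟩ ⟨z, hz.1⟩)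
    (hclose : (G.induce C'').edist ⟨w, hCC hw.1⟩ ⟨z, hCC hz.1⟩ ≤ (s : ℕ∞)) :
    ∃ (a : V) (ha : a ∈ S) (b : V) (hb : b ∈ S),
      (G.induce C).edist ⟨w, hw.1⟩ ⟨a, hSC ha⟩ +
        (G.induce C'').edist ⟨a, hCC (hSC ha)⟩ ⟨b, hCC (hSC hb)⟩ +
        (G.induce C).edist ⟨b, hSC hb⟩ ⟨z, hz.1⟩ ≤ (s : ℕ∞) := by
  set H := G.induce C with hH
  set K := G.induce C'' with hK
  set zK : C'' := ⟨z, hCC hz.1⟩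
  set zH : C := ⟨z, hz.1⟩
  -- main mutual induction
  have main : ∀ n : ℕ,
      (∀ (x : C'') (hx : (x : V) ∈ C) (p : K.Walk x zK), p.length = n →
        H.edist ⟨x, hx⟩ zH ≤ (n : ℕ∞) ∨
        ∃ (a : V) (ha : a ∈ S) (b : V) (hb : b ∈ S),
          H.edist ⟨x, hx⟩ ⟨a, hSC ha⟩ + K.edist ⟨a, hCC (hSC ha)⟩ ⟨b, hCC (hSC hb)⟩ +
            H.edist ⟨b, hSC hb⟩ zH ≤ (n : ℕ∞)) ∧
      (∀ (x : C'') (hx : (x : V) ∉ C) (p : K.Walk x zK), p.length = n →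
        ∃ (b : V) (hb : b ∈ S),
          K.edist x ⟨b, hCC (hSC hb)⟩ + H.edist ⟨b, hSC hb⟩ zH ≤ (n : ℕ∞)) := by
    intro n
    induction n with
    | zero =>
      constructor
      · intro x hx p hp
        left
        have hxz : x = zK := SimpleGraph.Walk.eq_of_length_eq_zero hp
        have : (⟨x, hx⟩ : C) = zH := Subtype.ext (by simp [hxz, zK, zH])
        simp [this]
      · intro x hx p hp
        have hxz : x = zK := SimpleGraph.Walk.eq_of_length_eq_zero hp
        rw [hxz] at hx
        exact absurd hz.1 hx
    | succ n ih =>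
      constructor
      · intro x hx p hp
        cases p with
        | nil => simp at hp
        | cons h q =>
          rename_i y
          simp only [SimpleGraph.Walk.length_cons, Nat.succ.injEq] at hp
          by_cases hy : (y : V) ∈ C
          · rcases ih.1 y hy q hp with hd | ⟨a, ha, b, hb, hsum⟩
            · left
              have hadj : H.Adj ⟨x, hx⟩ ⟨y, hy⟩ := h
              calc H.edist ⟨x, hx⟩ zH ≤ H.edist ⟨x, hx⟩ ⟨y, hy⟩ + H.edist ⟨y, hy⟩ zH :=
                    SimpleGraph.edist_triangle
                _ ≤ 1 + (n : ℕ∞) := add_le_add (SimpleGraph.edist_le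
                      (SimpleGraph.Walk.cons hadj SimpleGraph.Walk.nil)) hd
                _ = ((n + 1 : ℕ) : ℕ∞) := by push_cast; ring
            · right
              refine ⟨a, ha, b, hb, ?_⟩
              have hadj : H.Adj ⟨x, hx⟩ ⟨y, hy⟩ := h
              have h1 : H.edist ⟨x, hx⟩ ⟨a, hSC ha⟩ ≤ 1 + H.edist ⟨y, hy⟩ ⟨a, hSC ha⟩ :=
                le_trans SimpleGraph.edist_triangle (add_le_add_left (SimpleGraph.edist_le
                  (SimpleGraph.Walk.cons hadj SimpleGraph.Walk.nil)) _)
              calc H.edist ⟨x, hx⟩ ⟨a, hSC ha⟩ + K.edist ⟨a, _⟩ ⟨b, _⟩ + H.edist ⟨b, hSC hb⟩ zH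
                  ≤ (1 + H.edist ⟨y, hy⟩ ⟨a, hSC ha⟩) + K.edist ⟨a, _⟩ ⟨b, _⟩ +
                    H.edist ⟨b, hSC hb⟩ zH := by gcongr
                _ = 1 + (H.edist ⟨y, hy⟩ ⟨a, hSC ha⟩ + K.edist ⟨a, _⟩ ⟨b, _⟩ +
                    H.edist ⟨b, hSC hb⟩ zH) := by ring
                _ ≤ 1 + (n : ℕ∞) := by gcongr
                _ = ((n + 1 : ℕ) : ℕ∞) := by push_cast; ring
          · -- y leaves C, so x must be in S
            have hxS : (x : V) ∈ S := by
              by_contra hxS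
              exact hsep x y h ⟨⟨hx, hxS⟩, ⟨y.2, hy⟩⟩
            obtain ⟨b, hb, hsum⟩ := ih.2 y hy q hp
            right
            refine ⟨x, hxS, b, hb, ?_⟩
            have e1 : H.edist ⟨x, hx⟩ ⟨(x : V), hSC hxS⟩ = 0 := by
              rw [SimpleGraph.edist_eq_zero_iff]
            have e2 : K.edist ⟨(x : V), hCC (hSC hxS)⟩ ⟨b, hCC (hSC hb)⟩ ≤
                1 + K.edist y ⟨b, hCC (hSC hb)⟩ := by
              have : (⟨(x : V), hCC (hSC hxS)⟩ : C'') = x := rfl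
              rw [this]
              exact le_trans SimpleGraph.edist_triangle (add_le_add_left
                (SimpleGraph.edist_le (SimpleGraph.Walk.cons h SimpleGraph.Walk.nil)) _)
            calc H.edist ⟨x, hx⟩ ⟨(x : V), hSC hxS⟩ + K.edist ⟨(x : V), _⟩ ⟨b, _⟩ +
                  H.edist ⟨b, hSC hb⟩ zH
                ≤ 0 + (1 + K.edist y ⟨b, hCC (hSC hb)⟩) + H.edist ⟨b, hSC hb⟩ zH :=
                  add_le_add (add_le_add (le_of_eq e1) e2) le_rfl
              _ = 1 + (K.edist y ⟨b, hCC (hSC hb)⟩ + H.edist ⟨b, hSC hb⟩ zH) := by ring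
              _ ≤ 1 + (n : ℕ∞) := by gcongr
              _ = ((n + 1 : ℕ) : ℕ∞) := by push_cast; ring
      · intro x hx p hp
        cases p with
        | nil => exact absurd hz.1 (by simpa using hx)
        | cons h q =>
          rename_i y
          simp only [SimpleGraph.Walk.length_cons, Nat.succ.injEq] at hp
          have hxy : K.edist x y ≤ 1 :=
            SimpleGraph.edist_le (SimpleGraph.Walk.cons h SimpleGraph.Walk.nil)
          by_cases hy : (y : V) ∈ C
          · have hyS : (y : V) ∈ S := by
              by_contra hyS
              exact hsep y x h.symm ⟨⟨hy, hyS⟩, ⟨x.2, hx⟩⟩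
            rcases ih.1 y hy q hp with hd | ⟨a, ha, b, hb, hsum⟩
            · refine ⟨y, hyS, ?_⟩
              have hyb : (⟨(y : V), hCC (hSC hyS)⟩ : C'') = y := rfl
              calc K.edist x ⟨(y : V), hCC (hSC hyS)⟩ + H.edist ⟨(y : V), hSC hyS⟩ zH
                  = K.edist x y + H.edist ⟨y, hy⟩ zH := by rw [hyb]
                _ ≤ 1 + (n : ℕ∞) := add_le_add hxy hd
                _ = ((n + 1 : ℕ) : ℕ∞) := by push_cast; ring
            · refine ⟨b, hb, ?_⟩
              have hmono : K.edist ⟨(y : V), hCC hy⟩ ⟨a, hCC (hSC ha)⟩ ≤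
                  H.edist ⟨y, hy⟩ ⟨a, hSC ha⟩ := edist_mono_induce G hCC ⟨y, hy⟩ ⟨a, hSC ha⟩
              have hyb : (⟨(y : V), hCC hy⟩ : C'') = y := rfl
              have e2 : K.edist x ⟨b, hCC (hSC hb)⟩ ≤
                  1 + (H.edist ⟨y, hy⟩ ⟨a, hSC ha⟩ + K.edist ⟨a, hCC (hSC ha)⟩ ⟨b, hCC (hSC hb)⟩) := by
                calc K.edist x ⟨b, hCC (hSC hb)⟩
                    ≤ K.edist x y + K.edist y ⟨b, hCC (hSC hb)⟩ := SimpleGraph.edist_triangle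
                  _ ≤ K.edist x y + (K.edist y ⟨a, hCC (hSC ha)⟩ +
                      K.edist ⟨a, hCC (hSC ha)⟩ ⟨b, hCC (hSC hb)⟩) := by
                      gcongr; exact SimpleGraph.edist_triangle
                  _ ≤ 1 + (H.edist ⟨y, hy⟩ ⟨a, hSC ha⟩ +
                      K.edist ⟨a, hCC (hSC ha)⟩ ⟨b, hCC (hSC hb)⟩) := by
                      gcongr
              calc K.edist x ⟨b, hCC (hSC hb)⟩ + H.edist ⟨b, hSC hb⟩ zH
                  ≤ (1 + (H.edist ⟨y, hy⟩ ⟨a, hSC ha⟩ +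
                      K.edist ⟨a, hCC (hSC ha)⟩ ⟨b, hCC (hSC hb)⟩)) +
                      H.edist ⟨b, hSC hb⟩ zH := by gcongr
                _ = 1 + (H.edist ⟨y, hy⟩ ⟨a, hSC ha⟩ + K.edist ⟨a, hCC (hSC ha)⟩ ⟨b, hCC (hSC hb)⟩ +
                      H.edist ⟨b, hSC hb⟩ zH) := by ring
                _ ≤ 1 + (n : ℕ∞) := by gcongr
                _ = ((n + 1 : ℕ) : ℕ∞) := by push_cast; ring
          · obtain ⟨b, hb, hsum⟩ := ih.2 y hy q hp
            refine ⟨b, hb, ?_⟩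
            calc K.edist x ⟨b, hCC (hSC hb)⟩ + H.edist ⟨b, hSC hb⟩ zH
                ≤ (K.edist x y + K.edist y ⟨b, hCC (hSC hb)⟩) + H.edist ⟨b, hSC hb⟩ zH := by
                  gcongr; exact SimpleGraph.edist_triangle
              _ ≤ 1 + (K.edist y ⟨b, hCC (hSC hb)⟩ + H.edist ⟨b, hSC hb⟩ zH) := by
                  rw [add_assoc]; gcongr
              _ ≤ 1 + (n : ℕ∞) := by gcongr
              _ = ((n + 1 : ℕ) : ℕ∞) := by push_cast; ring
  -- wrap up
  have hne : K.edist ⟨w, hCC hw.1⟩ zK ≠ ⊤ :=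
    fun h => by simp [h] at hclose
  obtain ⟨p, hp⟩ := SimpleGraph.exists_walk_of_edist_ne_top hne
  have hlen : (p.length : ℕ∞) ≤ (s : ℕ∞) := hp ▸ hclose
  rcases (main p.length).1 ⟨w, hCC hw.1⟩ hw.1 p rfl with hd | ⟨a, ha, b, hb, hsum⟩
  · exact absurd (lt_of_lt_of_le hfar (hd.trans hlen)) (lt_irrefl _)
  · exact ⟨a, ha, b, hb, hsum.trans hlen⟩
end

section
/- Let G be a simple graph with vertex set V, let C ⊆ V, let a, b ∈ C, and let δ ≥ 2 be an integer. Suppose V \ C = {x_1, …, x_{δ−1}} with x_1, …, x_{δ−1} pairwise distinct, and suppose the edges of G incident to vertices of V \ C are exactly: a x_1, the edges x_i x_{i+1} for 1 ≤ i ≤ δ−2, and x_{δ−1} b (so that V \ C induces a path of length δ joining a to b and attached to C only at a and b). Then for all u, v ∈ C, edist_G(u,v) = min( edist_{G[C]}(u,v), edist_{G[C]}(u,a) + δ + edist_{G[C]}(b,v), edist_{G[C]}(u,b) + δ + edist_{G[C]}(a,v) ), where all distances are taken in ℕ∞. -/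
open SimpleGraph

/-- Auxiliary potential: distance from `p` to `v` allowing a detour of length `δ`
between `a` and `b`. -/
noncomputable def mfun {V : Type*} (H : SimpleGraph V) (a b v : V) (δ : ℕ) (p : V) : ℕ∞ :=
  min (min (H.edist p v) (H.edist p a + (δ : ℕ∞) + H.edist b v))
    (H.edist p b + (δ : ℕ∞) + H.edist a v)

lemma mfun_adj {V : Type*} (H : SimpleGraph V) (a b v : V) (δ : ℕ) {p q : V}
    (h : H.Adj p q) : mfun H a b v δ p ≤ 1 + mfun H a b v δ q := by
  have h1 : H.edist p q ≤ 1 := by simpa using H.edist_le (Walk.cons h Walk.nil)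
  have tri : ∀ r : V, H.edist p r ≤ 1 + H.edist q r := fun r =>
    le_trans (H.edist_triangle (v := q)) (add_le_add_left h1 _)
  unfold mfun
  rw [← min_add_add_left, ← min_add_add_left]
  refine le_min (le_min ?_ ?_) ?_
  · exact le_trans (le_trans (min_le_left _ _) (min_le_left _ _)) (tri v)
  · refine le_trans (le_trans (min_le_left _ _) (min_le_right _ _)) ?_
    calc H.edist p a + (δ : ℕ∞) + H.edist b v
        ≤ (1 + H.edist q a) + (δ : ℕ∞) + H.edist b v := by
          exact add_le_add_left (add_le_add_left (tri a) _) _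
      _ = 1 + (H.edist q a + (δ : ℕ∞) + H.edist b v) := by
          rw [add_assoc 1 (H.edist q a) (δ : ℕ∞), add_assoc]
  · refine le_trans (min_le_right _ _) ?_
    calc H.edist p b + (δ : ℕ∞) + H.edist a v
        ≤ (1 + H.edist q b) + (δ : ℕ∞) + H.edist a v := by
          exact add_le_add_left (add_le_add_left (tri b) _) _
      _ = 1 + (H.edist q b + (δ : ℕ∞) + H.edist a v) := by
          rw [add_assoc 1 (H.edist q b) (δ : ℕ∞), add_assoc]

lemma mfun_key1 {V : Type*} (H : SimpleGraph V) (a b v : V) (δ : ℕ) :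
    mfun H a b v δ a ≤ (δ : ℕ∞) + mfun H a b v δ b := by
  have hA1 : mfun H a b v δ a ≤ (δ : ℕ∞) + H.edist b v := by
    refine le_trans (le_trans (min_le_left _ _) (min_le_right _ _)) ?_
    rw [H.edist_self, zero_add]
  have hA2 : mfun H a b v δ a ≤ H.edist a v :=
    le_trans (min_le_left _ _) (min_le_left _ _)
  have hlow : min (H.edist b v) (H.edist a v) ≤ mfun H a b v δ b := by
    refine le_min (le_min (min_le_left _ _) ?_) ?_
    · exact le_trans (min_le_left _ _) le_add_self
    · exact le_trans (min_le_right _ _) le_add_self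
  rcases le_total (H.edist b v) (H.edist a v) with h | h
  · calc mfun H a b v δ a ≤ (δ : ℕ∞) + H.edist b v := hA1
      _ = (δ : ℕ∞) + min (H.edist b v) (H.edist a v) := by rw [min_eq_left h]
      _ ≤ _ := add_le_add_right hlow _
  · calc mfun H a b v δ a ≤ H.edist a v := hA2
      _ ≤ (δ : ℕ∞) + H.edist a v := le_add_self
      _ = (δ : ℕ∞) + min (H.edist b v) (H.edist a v) := by rw [min_eq_right h]
      _ ≤ _ := add_le_add_right hlow _

lemma mfun_key2 {V : Type*} (H : SimpleGraph V) (a b v : V) (δ : ℕ) :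
    mfun H a b v δ b ≤ (δ : ℕ∞) + mfun H a b v δ a := by
  have hB1 : mfun H a b v δ b ≤ (δ : ℕ∞) + H.edist a v := by
    refine le_trans (min_le_right _ _) ?_
    rw [H.edist_self, zero_add]
  have hB2 : mfun H a b v δ b ≤ H.edist b v :=
    le_trans (min_le_left _ _) (min_le_left _ _)
  have hlow : min (H.edist b v) (H.edist a v) ≤ mfun H a b v δ a := by
    refine le_min (le_min ?_ ?_) ?_
    · exact min_le_right _ _
    · exact le_trans (min_le_left _ _) le_add_self
    · exact le_trans (min_le_right _ _) le_add_self
  rcases le_total (H.edist b v) (H.edist a v) with h | h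
  · calc mfun H a b v δ b ≤ H.edist b v := hB2
      _ ≤ (δ : ℕ∞) + H.edist b v := le_add_self
      _ = (δ : ℕ∞) + min (H.edist b v) (H.edist a v) := by rw [min_eq_left h]
      _ ≤ _ := add_le_add_right hlow _
  · calc mfun H a b v δ b ≤ (δ : ℕ∞) + H.edist a v := hB1
      _ = (δ : ℕ∞) + min (H.edist b v) (H.edist a v) := by rw [min_eq_right h]
      _ ≤ _ := add_le_add_right hlow _
/-- Semantics of a 'request': if `V \ C` consists of the pairwise distinct vertices
`x_1, …, x_{δ-1}` which form a path of length `δ` from `a ∈ C` to `b ∈ C` attached to `C`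
only at `a` and `b`, then distances in `G` between vertices of `C` are obtained from
distances in `G[C]` by also allowing the detour of length `δ` through the new path. -/
theorem edist_with_attached_path
    {V : Type*} (G : SimpleGraph V) (C : Set V)
    (a b : V) (ha : a ∈ C) (hb : b ∈ C)
    (δ : ℕ) (hδ : 2 ≤ δ) (x : ℕ → V)
    (hdistinct : ∀ i j, 1 ≤ i → i ≤ δ - 1 → 1 ≤ j → j ≤ δ - 1 → x i = x j → i = j)
    (hcompl : Cᶜ = {v : V | ∃ i, 1 ≤ i ∧ i ≤ δ - 1 ∧ v = x i})
    (hedges : ∀ u v : V, (u ∉ C ∨ v ∉ C) →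
      (G.Adj u v ↔
        (u = a ∧ v = x 1) ∨ (u = x 1 ∧ v = a) ∨
        (∃ i, 1 ≤ i ∧ i ≤ δ - 2 ∧
          ((u = x i ∧ v = x (i + 1)) ∨ (u = x (i + 1) ∧ v = x i))) ∨
        (u = x (δ - 1) ∧ v = b) ∨ (u = b ∧ v = x (δ - 1)))) :
    ∀ (u v : V) (hu : u ∈ C) (hv : v ∈ C),
      G.edist u v =
        min (min ((G.induce C).edist ⟨u, hu⟩ ⟨v, hv⟩)
              ((G.induce C).edist ⟨u, hu⟩ ⟨a, ha⟩ + (δ : ℕ∞) +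
                (G.induce C).edist ⟨b, hb⟩ ⟨v, hv⟩))
          ((G.induce C).edist ⟨u, hu⟩ ⟨b, hb⟩ + (δ : ℕ∞) +
            (G.induce C).edist ⟨a, ha⟩ ⟨v, hv⟩) := by
  intro u v hu hv
  set H : SimpleGraph C := G.induce C with hHdef
  have hxnot : ∀ i, 1 ≤ i → i ≤ δ - 1 → x i ∉ C := by
    intro i h1 h2
    have : x i ∈ Cᶜ := by rw [hcompl]; exact ⟨i, h1, h2, rfl⟩
    exact this
  have hupmono : ∀ (p q : V) (hp : p ∈ C) (hq : q ∈ C),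
      G.edist p q ≤ H.edist ⟨p, hp⟩ ⟨q, hq⟩ := by
    intro p q hp hq
    rcases eq_or_ne (H.edist ⟨p, hp⟩ ⟨q, hq⟩) ⊤ with h | h
    · simp [h]
    · obtain ⟨W, hW⟩ := exists_walk_of_edist_ne_top h
      rw [← hW]
      have := G.edist_le (W.map (SimpleGraph.Embedding.induce C).toHom)
      rw [Walk.length_map] at this
      simpa using this
  have hab : G.edist a b ≤ (δ : ℕ∞) := by
    have hbase : ∃ W : G.Walk (x (δ - 1)) b, W.length = δ - (δ - 1) := by
      have hadj : G.Adj (x (δ - 1)) b :=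
        (hedges _ b (Or.inl (hxnot _ (by omega) le_rfl))).mpr
          (Or.inr (Or.inr (Or.inr (Or.inl ⟨rfl, rfl⟩))))
      exact ⟨Walk.cons hadj Walk.nil,
        by simp only [Walk.length_cons, Walk.length_nil]; omega⟩
    have hwalks : ∀ n k, 1 ≤ k → k ≤ δ - 1 → δ - 1 - k ≤ n →
        ∃ W : G.Walk (x k) b, W.length = δ - k := by
      intro n
      induction n with
      | zero =>
        intro k h1 h2 h3
        have hk : k = δ - 1 := by omega
        subst hk
        exact hbase
      | succ n ihn =>
        intro k h1 h2 h3
        by_cases hk : k = δ - 1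
        · subst hk; exact hbase
        · have hadj : G.Adj (x k) (x (k + 1)) :=
            (hedges _ _ (Or.inl (hxnot _ h1 h2))).mpr
              (Or.inr (Or.inr (Or.inl ⟨k, h1, by omega, Or.inl ⟨rfl, rfl⟩⟩)))
          obtain ⟨W', hW'⟩ := ihn (k + 1) (by omega) (by omega) (by omega)
          refine ⟨Walk.cons hadj W', ?_⟩
          rw [Walk.length_cons, hW']; omega
    obtain ⟨W1, hW1⟩ := hwalks (δ - 1 - 1) 1 le_rfl (by omega) le_rfl
    have hadj1 : G.Adj a (x 1) :=
      (hedges a (x 1) (Or.inr (hxnot 1 le_rfl (by omega)))).mpr (Or.inl ⟨rfl, rfl⟩)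
    refine le_trans (G.edist_le (Walk.cons hadj1 W1)) ?_
    rw [Walk.length_cons, hW1]
    have hsum : δ - 1 + 1 = δ := by omega
    exact_mod_cast le_of_eq hsum
  have keyAB : (mfun H ⟨a, ha⟩ ⟨b, hb⟩ ⟨v, hv⟩ δ ⟨a, ha⟩) ≤ (δ : ℕ∞) + (mfun H ⟨a, ha⟩ ⟨b, hb⟩ ⟨v, hv⟩ δ ⟨b, hb⟩) := mfun_key1 H _ _ _ δ
  have keyBA : (mfun H ⟨a, ha⟩ ⟨b, hb⟩ ⟨v, hv⟩ δ ⟨b, hb⟩) ≤ (δ : ℕ∞) + (mfun H ⟨a, ha⟩ ⟨b, hb⟩ ⟨v, hv⟩ δ ⟨a, ha⟩) := mfun_key2 H _ _ _ δ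
  have hδ1 : (δ : ℕ∞) = 1 + ((δ - 1 : ℕ) : ℕ∞) := by
    rw [← Nat.cast_one, ← Nat.cast_add]; congr 1; omega
  have main : ∀ (n : ℕ) (p : V) (W : G.Walk p v), W.length ≤ n →
      (∀ hp : p ∈ C, mfun H ⟨a, ha⟩ ⟨b, hb⟩ ⟨v, hv⟩ δ ⟨p, hp⟩ ≤ (W.length : ℕ∞)) ∧
      (∀ i, 1 ≤ i → i ≤ δ - 1 → p = x i →
        min ((i : ℕ∞) + (mfun H ⟨a, ha⟩ ⟨b, hb⟩ ⟨v, hv⟩ δ ⟨a, ha⟩)) (((δ - i : ℕ) : ℕ∞) + (mfun H ⟨a, ha⟩ ⟨b, hb⟩ ⟨v, hv⟩ δ ⟨b, hb⟩)) ≤ (W.length : ℕ∞)) := by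
    intro n
    induction n with
    | zero =>
      intro p W hW
      cases W with
      | nil =>
        refine ⟨fun hp => ?_, fun i h1 h2 hpx => absurd hv (hpx ▸ hxnot i h1 h2)⟩
        simp only [Walk.length_nil, Nat.cast_zero]
        exact le_trans (le_trans (min_le_left _ _) (min_le_left _ _))
          (le_of_eq (edist_eq_zero_iff.mpr rfl))
      | cons hadj W' => simp [Walk.length_cons] at hW
    | succ n ihn =>
      intro p W hW
      cases W with
      | nil =>
        refine ⟨fun hp => ?_, fun i h1 h2 hpx => absurd hv (hpx ▸ hxnot i h1 h2)⟩
        simp only [Walk.length_nil, Nat.cast_zero]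
        exact le_trans (le_trans (min_le_left _ _) (min_le_left _ _))
          (le_of_eq (edist_eq_zero_iff.mpr rfl))
      | @cons _ q _ hadj W' =>
        have hlen : W'.length ≤ n := by
          have := hW; rw [Walk.length_cons] at this; omega
        obtain ⟨ih1, ih2⟩ := ihn q W' hlen
        have hcast : (((Walk.cons hadj W').length : ℕ) : ℕ∞) = (W'.length : ℕ∞) + 1 := by
          rw [Walk.length_cons]; push_cast; ring
        constructor
        · intro hp
          rw [hcast]
          by_cases hq : q ∈ C
          · have hAdjH : H.Adj ⟨p, hp⟩ ⟨q, hq⟩ := by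
              rw [hHdef]; simpa using hadj
            calc mfun H ⟨a, ha⟩ ⟨b, hb⟩ ⟨v, hv⟩ δ ⟨p, hp⟩
                ≤ 1 + mfun H ⟨a, ha⟩ ⟨b, hb⟩ ⟨v, hv⟩ δ ⟨q, hq⟩ := mfun_adj H _ _ _ δ hAdjH
              _ ≤ 1 + (W'.length : ℕ∞) := add_le_add_right (ih1 hq) _
              _ = (W'.length : ℕ∞) + 1 := add_comm _ _
          · rcases (hedges p q (Or.inr hq)).mp hadj with ⟨hpa, hqx⟩ | ⟨hpx, hqa⟩ |
              ⟨j, hj1, hj2, ⟨hpx, hqx⟩ | ⟨hpx, hqx⟩⟩ | ⟨hpx, hqb⟩ | ⟨hpb, hqx⟩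
            · -- p = a, q = x 1
              subst hqx
              rw [show (⟨p, hp⟩ : C) = ⟨a, ha⟩ from Subtype.ext hpa]
              have hih := ih2 1 le_rfl (by omega) rfl
              rcases min_le_iff.mp hih with h | h
              · exact le_trans (le_trans le_add_self h) le_self_add
              · calc (mfun H ⟨a, ha⟩ ⟨b, hb⟩ ⟨v, hv⟩ δ ⟨a, ha⟩) ≤ (δ : ℕ∞) + (mfun H ⟨a, ha⟩ ⟨b, hb⟩ ⟨v, hv⟩ δ ⟨b, hb⟩) := keyAB
                  _ = 1 + (((δ - 1 : ℕ) : ℕ∞) + (mfun H ⟨a, ha⟩ ⟨b, hb⟩ ⟨v, hv⟩ δ ⟨b, hb⟩)) := by rw [hδ1, add_assoc]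
                  _ ≤ 1 + (W'.length : ℕ∞) := add_le_add_right h _
                  _ = (W'.length : ℕ∞) + 1 := add_comm _ _
            · exact absurd hp (hpx ▸ hxnot 1 le_rfl (by omega))
            · exact absurd hp (hpx ▸ hxnot j hj1 (by omega))
            · exact absurd hp (hpx ▸ hxnot (j + 1) (by omega) (by omega))
            · exact absurd hp (hpx ▸ hxnot (δ - 1) (by omega) le_rfl)
            · -- p = b, q = x (δ - 1)
              subst hqx
              rw [show (⟨p, hp⟩ : C) = ⟨b, hb⟩ from Subtype.ext hpb]
              have hih := ih2 (δ - 1) (by omega) le_rfl rfl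
              rcases min_le_iff.mp hih with h | h
              · calc (mfun H ⟨a, ha⟩ ⟨b, hb⟩ ⟨v, hv⟩ δ ⟨b, hb⟩) ≤ (δ : ℕ∞) + (mfun H ⟨a, ha⟩ ⟨b, hb⟩ ⟨v, hv⟩ δ ⟨a, ha⟩) := keyBA
                  _ = 1 + (((δ - 1 : ℕ) : ℕ∞) + (mfun H ⟨a, ha⟩ ⟨b, hb⟩ ⟨v, hv⟩ δ ⟨a, ha⟩)) := by rw [hδ1, add_assoc]
                  _ ≤ 1 + (W'.length : ℕ∞) := add_le_add_right h _
                  _ = (W'.length : ℕ∞) + 1 := add_comm _ _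
              · have h1 : ((δ - (δ - 1) : ℕ) : ℕ∞) = 1 := by norm_cast; omega
                rw [h1] at h
                exact le_trans (le_trans le_add_self h) le_self_add
        · intro i hi1 hi2 hpx
          rw [hcast]
          have hpnot : p ∉ C := by rw [hpx]; exact hxnot i hi1 hi2
          rcases (hedges p q (Or.inl hpnot)).mp hadj with ⟨hpa, hqx⟩ | ⟨hpx1, hqa⟩ |
              ⟨j, hj1, hj2, ⟨hpj, hqj⟩ | ⟨hpj, hqj⟩⟩ | ⟨hpx', hqb⟩ | ⟨hpb, hqx⟩
          · exact absurd (hpa ▸ ha) hpnot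
          · -- p = x 1, q = a
            have hi : i = 1 := hdistinct i 1 hi1 hi2 le_rfl (by omega) (hpx.symm.trans hpx1)
            subst hi
            have hq : q ∈ C := by rw [hqa]; exact ha
            have hA := ih1 hq
            rw [show (⟨q, hq⟩ : C) = ⟨a, ha⟩ from Subtype.ext hqa] at hA
            refine le_trans (min_le_left _ _) ?_
            calc ((1 : ℕ) : ℕ∞) + (mfun H ⟨a, ha⟩ ⟨b, hb⟩ ⟨v, hv⟩ δ ⟨a, ha⟩) = (mfun H ⟨a, ha⟩ ⟨b, hb⟩ ⟨v, hv⟩ δ ⟨a, ha⟩) + 1 := by rw [Nat.cast_one, add_comm]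
              _ ≤ (W'.length : ℕ∞) + 1 := add_le_add_left hA _
          · -- p = x j, q = x (j+1)
            have hi : i = j := hdistinct i j hi1 hi2 hj1 (by omega) (hpx.symm.trans hpj)
            subst hi
            subst hqj
            have hih := ih2 (i + 1) (by omega) (by omega) rfl
            rcases min_le_iff.mp hih with h | h
            · refine le_trans (min_le_left _ _) ?_
              have hle : ((i : ℕ) : ℕ∞) ≤ ((i + 1 : ℕ) : ℕ∞) := by
                exact_mod_cast Nat.le_succ i
              exact le_trans (le_trans (add_le_add_left hle _) h) le_self_add
            · refine le_trans (min_le_right _ _) ?_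
              have hcast2 : ((δ - i : ℕ) : ℕ∞) = ((δ - (i + 1) : ℕ) : ℕ∞) + 1 := by
                norm_cast; omega
              calc ((δ - i : ℕ) : ℕ∞) + (mfun H ⟨a, ha⟩ ⟨b, hb⟩ ⟨v, hv⟩ δ ⟨b, hb⟩)
                  = (((δ - (i + 1) : ℕ) : ℕ∞) + (mfun H ⟨a, ha⟩ ⟨b, hb⟩ ⟨v, hv⟩ δ ⟨b, hb⟩)) + 1 := by
                    rw [hcast2, add_right_comm]
                _ ≤ (W'.length : ℕ∞) + 1 := add_le_add_left h _
          · -- p = x (j+1), q = x j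
            have hi : i = j + 1 :=
              hdistinct i (j + 1) hi1 hi2 (by omega) (by omega) (hpx.symm.trans hpj)
            subst hi
            subst hqj
            have hih := ih2 j hj1 (by omega) rfl
            rcases min_le_iff.mp hih with h | h
            · refine le_trans (min_le_left _ _) ?_
              have hcast2 : ((j + 1 : ℕ) : ℕ∞) = ((j : ℕ) : ℕ∞) + 1 := by push_cast; ring
              calc ((j + 1 : ℕ) : ℕ∞) + (mfun H ⟨a, ha⟩ ⟨b, hb⟩ ⟨v, hv⟩ δ ⟨a, ha⟩) = (((j : ℕ) : ℕ∞) + (mfun H ⟨a, ha⟩ ⟨b, hb⟩ ⟨v, hv⟩ δ ⟨a, ha⟩)) + 1 := by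
                    rw [hcast2, add_right_comm]
                _ ≤ (W'.length : ℕ∞) + 1 := add_le_add_left h _
            · refine le_trans (min_le_right _ _) ?_
              have hle : ((δ - (j + 1) : ℕ) : ℕ∞) ≤ ((δ - j : ℕ) : ℕ∞) := by
                exact_mod_cast Nat.sub_le_sub_left (Nat.le_succ j) δ
              exact le_trans (le_trans (add_le_add_left hle _) h) le_self_add
          · -- p = x (δ-1), q = b
            have hi : i = δ - 1 :=
              hdistinct i (δ - 1) hi1 hi2 (by omega) le_rfl (hpx.symm.trans hpx')
            subst hi
            have hq : q ∈ C := by rw [hqb]; exact hb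
            have hB := ih1 hq
            rw [show (⟨q, hq⟩ : C) = ⟨b, hb⟩ from Subtype.ext hqb] at hB
            refine le_trans (min_le_right _ _) ?_
            have h1 : ((δ - (δ - 1) : ℕ) : ℕ∞) = 1 := by norm_cast; omega
            calc ((δ - (δ - 1) : ℕ) : ℕ∞) + (mfun H ⟨a, ha⟩ ⟨b, hb⟩ ⟨v, hv⟩ δ ⟨b, hb⟩) = (mfun H ⟨a, ha⟩ ⟨b, hb⟩ ⟨v, hv⟩ δ ⟨b, hb⟩) + 1 := by rw [h1, add_comm]
              _ ≤ (W'.length : ℕ∞) + 1 := add_le_add_left hB _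
          · exact absurd (hpb ▸ hb) hpnot
  have lower : mfun H ⟨a, ha⟩ ⟨b, hb⟩ ⟨v, hv⟩ δ ⟨u, hu⟩ ≤ G.edist u v := by
    rcases eq_or_ne (G.edist u v) ⊤ with h | h
    · simp [h]
    · obtain ⟨W, hW⟩ := exists_walk_of_edist_ne_top h
      rw [← hW]
      exact (main W.length u W le_rfl).1 hu
  have upper1 : G.edist u v ≤ H.edist ⟨u, hu⟩ ⟨v, hv⟩ := hupmono u v hu hv
  have upper2 : G.edist u v ≤
      H.edist ⟨u, hu⟩ ⟨a, ha⟩ + (δ : ℕ∞) + H.edist ⟨b, hb⟩ ⟨v, hv⟩ := by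
    calc G.edist u v ≤ G.edist u a + G.edist a v := G.edist_triangle
      _ ≤ G.edist u a + (G.edist a b + G.edist b v) :=
          add_le_add_right G.edist_triangle _
      _ = G.edist u a + G.edist a b + G.edist b v := (add_assoc _ _ _).symm
      _ ≤ H.edist ⟨u, hu⟩ ⟨a, ha⟩ + (δ : ℕ∞) + H.edist ⟨b, hb⟩ ⟨v, hv⟩ :=
          add_le_add (add_le_add (hupmono u a hu ha) hab) (hupmono b v hb hv)
  have upper3 : G.edist u v ≤
      H.edist ⟨u, hu⟩ ⟨b, hb⟩ + (δ : ℕ∞) + H.edist ⟨a, ha⟩ ⟨v, hv⟩ := by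
    have hba : G.edist b a ≤ (δ : ℕ∞) := by rw [SimpleGraph.edist_comm]; exact hab
    calc G.edist u v ≤ G.edist u b + G.edist b v := G.edist_triangle
      _ ≤ G.edist u b + (G.edist b a + G.edist a v) :=
          add_le_add_right G.edist_triangle _
      _ = G.edist u b + G.edist b a + G.edist a v := (add_assoc _ _ _).symm
      _ ≤ H.edist ⟨u, hu⟩ ⟨b, hb⟩ + (δ : ℕ∞) + H.edist ⟨a, ha⟩ ⟨v, hv⟩ :=
          add_le_add (add_le_add (hupmono u b hu hb) hba) (hupmono a v ha hv)
  exact le_antisymm (le_min (le_min upper1 upper2) upper3) lower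
end
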